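/- Let M be a submanifold of a Randers manifold (N,F) with navigation data (h,W), and n a unit normal vector (F(n)=1, L(n)|_{TM}=0). Then the induced metric ĝ_n = φ*g_n on M is conformal to the induced Riemannian metric h̄ = φ*h, with ĝ_n = h̄ / (1 + ⟨n̄, W⟩_h), where n̄ = n - W is the h-unit normal. -/

import Mathlib

/-!
Write `F = (r - ⟪W, ·⟫) / λ` with `r y = √(λ⟪y, y⟫ + ⟪W, y⟫²)`. For directions `X, Y` killed by
the Legendre transform `d(F²/2)_n = F(n) dF_n`, the Hessian of `F²/2` at the unit vector `n`
reduces to that of `F`, i.e. to `D²r / λ`. Since `r²/2` is a quadratic form, differentiating it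
twice gives `r · D²r(X, Y) = λ⟪X, Y⟫ + ⟪W, X⟫⟪W, Y⟫ - dr(X) dr(Y)`, and `dF_n(X) = 0` says
`dr_n(X) = ⟪W, X⟫`, so the last two terms cancel. Finally `r(n) = λ F(n) + ⟪W, n⟫ = 1 + ⟪n - W, W⟫`.
-/

open scoped RealInnerProductSpace
open Topology

section Hessian

variable {E : Type*} [NormedAddCommGroup E] [NormedSpace ℝ E]

noncomputable def hessian (f : E → ℝ) (x X Y : E) : ℝ := fderiv ℝ (fun z => fderiv ℝ f z Y) x X

lemma ContDiffAt.differentiableAt_fderiv_apply {f : E → ℝ} {x : E} (hf : ContDiffAt ℝ 2 f x)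
    (Y : E) : DifferentiableAt ℝ (fun z => fderiv ℝ f z Y) x :=
  ((hf.fderiv_right (m := 1) (by norm_num)).differentiableAt one_ne_zero).clm_apply
    (differentiableAt_const Y)

lemma fderiv_half_sq_apply {f : E → ℝ} {x : E} (hf : DifferentiableAt ℝ f x) (Y : E) :
    fderiv ℝ (fun v => f v ^ 2 / 2) x Y = f x * fderiv ℝ f x Y := by
  simp only [div_eq_mul_inv]
  rw [((hf.hasFDerivAt.pow 2).mul_const 2⁻¹).fderiv]
  simp only [Nat.add_one_sub_one, pow_one, nsmul_eq_mul, Nat.cast_ofNat,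
    smul_apply, smul_eq_mul]
  ring

lemma hessian_half_sq {f : E → ℝ} {x : E} (hf : ContDiffAt ℝ 2 f x) (X Y : E) :
    hessian (fun v => f v ^ 2 / 2) x X Y =
      fderiv ℝ f x X * fderiv ℝ f x Y + f x * hessian f x X Y := by
  have hfirst : (fun z => fderiv ℝ (fun v => f v ^ 2 / 2) z Y) =ᶠ[𝓝 x]
      fun z => f z * fderiv ℝ f z Y := by
    filter_upwards [hf.eventually (by simp)] with z hz
    exact fderiv_half_sq_apply (hz.differentiableAt (by simp)) Y
  rw [hessian, hfirst.fderiv_eq, fderiv_fun_mul (hf.differentiableAt (by simp))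
    (hf.differentiableAt_fderiv_apply Y)]
  simp only [add_apply, smul_apply, smul_eq_mul, hessian]
  ring

lemma fderiv_sub_clm_div_const_apply {f : E → ℝ} {x : E} (hf : DifferentiableAt ℝ f x)
    (ℓ : E →L[ℝ] ℝ) (c : ℝ) (Y : E) :
    fderiv ℝ (fun v => (f v - ℓ v) / c) x Y = c⁻¹ * (fderiv ℝ f x Y - ℓ Y) := by
  simp only [div_eq_mul_inv]
  rw [((hf.hasFDerivAt.fun_sub ℓ.hasFDerivAt).mul_const c⁻¹).fderiv]
  simp

lemma hessian_sub_clm_div_const {f : E → ℝ} {x : E} (hf : ContDiffAt ℝ 2 f x) (ℓ : E →L[ℝ] ℝ)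
    (c : ℝ) (X Y : E) :
    hessian (fun v => (f v - ℓ v) / c) x X Y = hessian f x X Y / c := by
  have hfirst : (fun z => fderiv ℝ (fun v => (f v - ℓ v) / c) z Y) =ᶠ[𝓝 x]
      fun z => c⁻¹ * (fderiv ℝ f z Y - ℓ Y) := by
    filter_upwards [hf.eventually (by simp)] with z hz
    exact fderiv_sub_clm_div_const_apply (hz.differentiableAt (by simp)) ℓ c Y
  rw [hessian, hfirst.fderiv_eq,
    fderiv_const_mul ((hf.differentiableAt_fderiv_apply Y).sub_const _), fderiv_sub_const]
  simp [hessian, div_eq_mul_inv, mul_comm]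

end Hessian

section Randers

variable {V : Type*} [NormedAddCommGroup V] [InnerProductSpace ℝ V] (W : V) (lam : ℝ)

def randersRadicand (y : V) : ℝ := lam * ⟪y, y⟫ + ⟪W, y⟫ ^ 2

noncomputable def randersRoot (y : V) : ℝ := √(randersRadicand W lam y)

noncomputable def randersNorm (y : V) : ℝ := (randersRoot W lam y - ⟪W, y⟫) / lam

lemma contDiff_randersRadicand : ContDiff ℝ 2 (randersRadicand W lam) := by
  unfold randersRadicand
  exact (contDiff_const.mul (contDiff_id.inner ℝ contDiff_id)).add
    ((contDiff_const.inner ℝ contDiff_id).pow 2)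

variable {W lam}

lemma hessian_half_randersRadicand (x X Y : V) :
    hessian (fun v => randersRadicand W lam v / 2) x X Y = lam * ⟪X, Y⟫ + ⟪W, X⟫ * ⟪W, Y⟫ := by
  have hfirst : (fun z => fderiv ℝ (fun v => randersRadicand W lam v / 2) z Y) =
      fun z => lam * ⟪z, Y⟫ + ⟪W, z⟫ * ⟪W, Y⟫ := by
    funext z
    have h : HasFDerivAt (fun v : V => (lam * ⟪v, v⟫ + ⟪W, v⟫ ^ 2) * 2⁻¹) _ z :=
      ((((hasFDerivAt_id z).inner ℝ (hasFDerivAt_id z)).const_mul lam).add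
        (((hasFDerivAt_const W z).inner ℝ (hasFDerivAt_id z)).pow 2)).mul_const 2⁻¹
    simp only [randersRadicand, div_eq_mul_inv]
    rw [h.fderiv]
    simp only [id_eq, add_apply, smul_apply,
      ContinuousLinearMap.comp_apply, ContinuousLinearMap.prod_apply,
      ContinuousLinearMap.id_apply, zero_apply, fderivInnerCLM_apply,
      real_inner_comm z Y, inner_zero_left, add_zero, smul_eq_mul, nsmul_eq_mul]
    ring
  have h : HasFDerivAt (fun z : V => lam * ⟪z, Y⟫ + ⟪W, z⟫ * ⟪W, Y⟫) _ x :=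
    (((hasFDerivAt_id x).inner ℝ (hasFDerivAt_const Y x)).const_mul lam).add
      (((hasFDerivAt_const W x).inner ℝ (hasFDerivAt_id x)).mul_const ⟪W, Y⟫)
  rw [hessian, hfirst, h.fderiv]
  simp only [id_eq, add_apply, smul_apply,
    ContinuousLinearMap.comp_apply, ContinuousLinearMap.prod_apply, ContinuousLinearMap.id_apply,
    zero_apply, fderivInnerCLM_apply, inner_zero_left, inner_zero_right,
    zero_add, add_zero, smul_eq_mul]
  ring

lemma randersRadicand_nonneg (hlam : 0 ≤ lam) (y : V) : 0 ≤ randersRadicand W lam y :=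
  add_nonneg (mul_nonneg hlam real_inner_self_nonneg) (sq_nonneg _)

lemma contDiffAt_randersRoot {x : V} (hx : randersRadicand W lam x ≠ 0) :
    ContDiffAt ℝ 2 (randersRoot W lam) x :=
  (contDiff_randersRadicand W lam).contDiffAt.sqrt hx

lemma randersRoot_mul_hessian (hlam : 0 ≤ lam) {x : V} (hx : randersRadicand W lam x ≠ 0)
    (X Y : V) :
    randersRoot W lam x * hessian (randersRoot W lam) x X Y = lam * ⟪X, Y⟫ + ⟪W, X⟫ * ⟪W, Y⟫ -
      fderiv ℝ (randersRoot W lam) x X * fderiv ℝ (randersRoot W lam) x Y := by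
  have hsq : (fun v => randersRoot W lam v ^ 2 / 2) = fun v => randersRadicand W lam v / 2 := by
    funext v
    rw [randersRoot, Real.sq_sqrt (randersRadicand_nonneg hlam v)]
  have := hessian_half_sq (contDiffAt_randersRoot hx) X Y
  rw [hsq, hessian_half_randersRadicand] at this
  linarith

lemma contDiffAt_randersNorm {x : V} (hx : randersRadicand W lam x ≠ 0) :
    ContDiffAt ℝ 2 (randersNorm W lam) x := by
  unfold randersNorm
  exact ((contDiffAt_randersRoot hx).sub (contDiffAt_const.inner ℝ contDiffAt_id)).div_const lam

lemma fderiv_randersNorm_apply {x : V} (hx : randersRadicand W lam x ≠ 0) (X : V) :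
    fderiv ℝ (randersNorm W lam) x X = lam⁻¹ * (fderiv ℝ (randersRoot W lam) x X - ⟪W, X⟫) :=
  fderiv_sub_clm_div_const_apply ((contDiffAt_randersRoot hx).differentiableAt (by simp))
    (innerSL ℝ W) lam X

lemma hessian_randersNorm {x : V} (hx : randersRadicand W lam x ≠ 0) (X Y : V) :
    hessian (randersNorm W lam) x X Y = hessian (randersRoot W lam) x X Y / lam :=
  hessian_sub_clm_div_const (contDiffAt_randersRoot hx) (innerSL ℝ W) lam X Y

lemma randersRoot_eq_of_randersNorm_eq_one (hlam : lam ≠ 0) {n : V}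
    (hn : randersNorm W lam n = 1) : randersRoot W lam n = lam + ⟪W, n⟫ := by
  rw [randersNorm, div_eq_one_iff_eq hlam] at hn
  linarith

lemma randersRadicand_ne_zero_of_randersNorm_eq_one (hlam : 0 < lam) {n : V}
    (hn : randersNorm W lam n = 1) : randersRadicand W lam n ≠ 0 := by
  intro h0
  have hzero : lam + ⟪W, n⟫ = 0 := by
    rw [← randersRoot_eq_of_randersNorm_eq_one hlam.ne' hn, randersRoot, h0, Real.sqrt_zero]
  have hle : ⟪W, n⟫ ^ 2 ≤ randersRadicand W lam n :=
    le_add_of_nonneg_left (mul_nonneg hlam.le real_inner_self_nonneg)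
  nlinarith

lemma hessian_half_sq_randersNorm (hlam : 0 < lam) {n X Y : V} (hn : randersNorm W lam n = 1)
    (hX : fderiv ℝ (fun v => randersNorm W lam v ^ 2 / 2) n X = 0)
    (hY : fderiv ℝ (fun v => randersNorm W lam v ^ 2 / 2) n Y = 0) :
    hessian (fun v => randersNorm W lam v ^ 2 / 2) n X Y = ⟪X, Y⟫ / (lam + ⟪W, n⟫) := by
  have hroot := randersRoot_eq_of_randersNorm_eq_one hlam.ne' hn
  have hrad := randersRadicand_ne_zero_of_randersNorm_eq_one hlam hn
  have hroot_pos : 0 < lam + ⟪W, n⟫ :=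
    hroot ▸ Real.sqrt_pos.2 ((randersRadicand_nonneg hlam.le n).lt_of_ne' hrad)
  have hF := contDiffAt_randersNorm hrad
  have hdF : ∀ Z, fderiv ℝ (fun v => randersNorm W lam v ^ 2 / 2) n Z = 0 →
      fderiv ℝ (randersNorm W lam) n Z = 0 := fun Z hZ => by
    rwa [fderiv_half_sq_apply (hF.differentiableAt (by simp)), hn, one_mul] at hZ
  have hdroot : ∀ Z, fderiv ℝ (fun v => randersNorm W lam v ^ 2 / 2) n Z = 0 →
      fderiv ℝ (randersRoot W lam) n Z = ⟪W, Z⟫ := fun Z hZ => by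
    have h := hdF Z hZ
    rw [fderiv_randersNorm_apply hrad, mul_eq_zero] at h
    rcases h with h | h
    · exact absurd h (inv_ne_zero hlam.ne')
    · linarith
  have hmul := randersRoot_mul_hessian hlam.le hrad X Y
  rw [hdroot X hX, hdroot Y hY, hroot] at hmul
  rw [hessian_half_sq hF, hdF X hX, hn, hessian_randersNorm hrad]
  field_simp
  linarith

end Randers

theorem stmt4 (V : Type*) [NormedAddCommGroup V] [InnerProductSpace ℝ V]
    (W : V) (hW : ‖W‖ < 1) (lam : ℝ) (hlam : lam = 1 - ‖W‖ ^ 2)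
    (F : V → ℝ)
    (hF : ∀ y, F y = (Real.sqrt (lam * ⟪y, y⟫ + ⟪W, y⟫ ^ 2) - ⟪W, y⟫) / lam)
    -- fundamental tensor of `F` with reference vector `y`
    (g : V → V → V → ℝ)
    (hg : ∀ y X Y, g y X Y =
      fderiv ℝ (fun z => fderiv ℝ (fun v => F v ^ 2 / 2) z Y) y X)
    -- tangent space of the submanifold
    (T : Submodule ℝ V)
    -- `F`-unit normal vector
    (n : V) (hn : F n = 1)
    (hnormal : ∀ X ∈ T, fderiv ℝ (fun v => F v ^ 2 / 2) n X = 0)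
    (nbar : V) (hnbar : nbar = n - W) :
    ∀ X ∈ T, ∀ Y ∈ T, g n X Y = ⟪X, Y⟫ / (1 + ⟪nbar, W⟫) := by
  intro X hX Y hY
  have hlam_pos : 0 < lam := by
    rw [hlam, sub_pos]
    exact pow_lt_one₀ (norm_nonneg W) hW two_ne_zero
  have hden : 1 + ⟪nbar, W⟫ = lam + ⟪W, n⟫ := by
    rw [hnbar, inner_sub_left, real_inner_comm, real_inner_self_eq_norm_sq, hlam]
    ring
  obtain rfl : F = randersNorm W lam := funext hF
  rw [hg, hden]
  exact hessian_half_sq_randersNorm hlam_pos hn (hnormal X hX) (hnormal Y hY)
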